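/- If D : S → M is a Jordan (δ,f)-derivation on a 2-torsion-free bimodule M, and x, y ∈ S commute (xy = yx), then D(xy) = D(x)y + f(x)δ(y). -/

import Mathlib

/-!
Write `m · s` for `op s • m` and let `H(a, b) = D(ab) - (D(a) b + f(a) δ(b))`.
Linearising the Jordan identity gives `D(ab + ba) = D(a) b + D(b) a + f(a) δ(b) + f(b) δ(a)`.
For commuting `a, b`, the element `2ab²` is both `b (ba) + (ba) b` and `b² a + a b²`;
comparing the two expansions, using `f(a) b = f(ab) = f(b) a`, leaves `H(a, b) · b = 0`.
Since `δ 1 = 0`, also `H(a, b + 1) = H(a, b)`, so `H(a, b) = H(a, b) · (b + 1) - H(a, b) · b = 0`.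
-/

open MulOpposite

theorem map_one_eq_zero_of_leibniz {S : Type*} [Ring S] {δ : S → S}
    (hδmul : ∀ a b : S, δ (a * b) = δ a * b + a * δ b) : δ 1 = 0 := by
  simpa using hδmul 1 1

section LeibnizDefect

variable {S M : Type*} [Ring S] [AddCommGroup M] [Module Sᵐᵒᵖ M]
  (δ : S → S) (f D : S → M)

def leibnizDefect (a b : S) : M := D (a * b) - (op b • D a + op (δ b) • f a)

variable {δ f D}

theorem map_mul_add_mul_swap_of_jordan (hδadd : ∀ a b : S, δ (a + b) = δ a + δ b)
    (hfadd : ∀ a b : S, f (a + b) = f a + f b) (hDadd : ∀ a b : S, D (a + b) = D a + D b)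
    (hJordan : ∀ x : S, D (x * x) = op x • D x + op (δ x) • f x) (a b : S) :
    D (a * b + b * a) = op b • D a + op a • D b + op (δ b) • f a + op (δ a) • f b := by
  have h := hJordan (a + b)
  rw [show (a + b) * (a + b) = a * a + (a * b + b * a) + b * b by noncomm_ring] at h
  simp only [hDadd, hδadd, hfadd, hJordan, op_add, add_smul, smul_add] at h ⊢
  linear_combination (norm := abel) h

theorem smul_leibnizDefect_eq_zero (hδadd : ∀ a b : S, δ (a + b) = δ a + δ b)
    (hδmul : ∀ a b : S, δ (a * b) = δ a * b + a * δ b)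
    (hfadd : ∀ a b : S, f (a + b) = f a + f b) (hfright : ∀ x a : S, f (x * a) = op a • f x)
    (hDadd : ∀ a b : S, D (a + b) = D a + D b)
    (hJordan : ∀ x : S, D (x * x) = op x • D x + op (δ x) • f x) {a b : S}
    (hc : Commute a b) : op b • leibnizDefect δ f D a b = 0 := by
  have hlin := map_mul_add_mul_swap_of_jordan hδadd hfadd hDadd hJordan
  have hsq : b * (b * a) + b * a * b = b * b * a + a * (b * b) := by
    rw [← mul_assoc a, hc.eq, ← mul_assoc b b a]
  have h := (hlin b (b * a)).symm.trans ((congrArg D hsq).trans (hlin (b * b) a))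
  have hf : op a • f b = op b • f a := by rw [← hfright, ← hfright, hc.eq]
  simp only [hδmul, hfright, hJordan, op_mul, op_add, add_smul, mul_smul, smul_add] at h
  rw [← hc.eq, hf] at h
  rw [leibnizDefect, smul_sub, smul_add]
  linear_combination (norm := abel) h

theorem leibnizDefect_add_one (hδadd : ∀ a b : S, δ (a + b) = δ a + δ b)
    (hδmul : ∀ a b : S, δ (a * b) = δ a * b + a * δ b)
    (hDadd : ∀ a b : S, D (a + b) = D a + D b) (a b : S) :
    leibnizDefect δ f D a (b + 1) = leibnizDefect δ f D a b := by
  simp only [leibnizDefect, mul_add, mul_one, hDadd, hδadd, map_one_eq_zero_of_leibniz hδmul,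
    add_zero, op_add, op_one, add_smul, one_smul]
  abel

theorem leibnizDefect_eq_zero (hδadd : ∀ a b : S, δ (a + b) = δ a + δ b)
    (hδmul : ∀ a b : S, δ (a * b) = δ a * b + a * δ b)
    (hfadd : ∀ a b : S, f (a + b) = f a + f b) (hfright : ∀ x a : S, f (x * a) = op a • f x)
    (hDadd : ∀ a b : S, D (a + b) = D a + D b)
    (hJordan : ∀ x : S, D (x * x) = op x • D x + op (δ x) • f x) {a b : S}
    (hc : Commute a b) : leibnizDefect δ f D a b = 0 := by
  have h : ∀ {c}, Commute a c → op c • leibnizDefect δ f D a c = 0 :=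
    smul_leibnizDefect_eq_zero hδadd hδmul hfadd hfright hDadd hJordan
  have h1 := h (hc.add_right (Commute.one_right a))
  rwa [leibnizDefect_add_one hδadd hδmul hDadd, op_add, op_one, add_smul, one_smul, h hc,
    zero_add] at h1

end LeibnizDefect

theorem jordan_derivation_on_commuting_elements_general
    {S M : Type*} [Ring S]
    [AddCommGroup M] [Module Sᵐᵒᵖ M]
    (δ : S → S) (hδadd : ∀ a b : S, δ (a + b) = δ a + δ b)
    (hδmul : ∀ a b : S, δ (a * b) = δ a * b + a * δ b)
    (f : S → M) (hfadd : ∀ a b : S, f (a + b) = f a + f b)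
    (hfright : ∀ x a : S, f (x * a) = op a • f x)
    (D : S → M) (hDadd : ∀ a b : S, D (a + b) = D a + D b)
    (hJordan : ∀ x : S, D (x * x) = op x • D x + op (δ x) • f x) :
    ∀ x y : S, x * y = y * x → D (x * y) = op y • D x + op (δ y) • f x := fun _ _ hc =>
  sub_eq_zero.mp (leibnizDefect_eq_zero hδadd hδmul hfadd hfright hDadd hJordan hc)

/-- For a Jordan `(δ,f)`-derivation `D` on a `2`-torsion-free bimodule `M`, if
`x` and `y` commute then `D(xy) = D(x)y + f(x)δ(y)`. -/
theorem jordan_derivation_on_commuting_elements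
    {R S M : Type*} [CommRing R] [Ring S] [Algebra R S]
    [AddCommGroup M] [Module S M] [Module Sᵐᵒᵖ M] [SMulCommClass S Sᵐᵒᵖ M]
    (htf : ∀ m : M, 2 • m = 0 → m = 0)
    (δ : S → S) (hδadd : ∀ a b : S, δ (a + b) = δ a + δ b)
    (hδmul : ∀ a b : S, δ (a * b) = δ a * b + a * δ b)
    (f : S → M) (hfadd : ∀ a b : S, f (a + b) = f a + f b)
    (hfleft : ∀ a x : S, f (a * x) = a • f x)
    (hfright : ∀ x a : S, f (x * a) = op a • f x)
    (D : S → M) (hDadd : ∀ a b : S, D (a + b) = D a + D b)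
    (hJordan : ∀ x : S, D (x * x) = op x • D x + op (δ x) • f x) :
    ∀ x y : S, x * y = y * x → D (x * y) = op y • D x + op (δ y) • f x :=
  jordan_derivation_on_commuting_elements_general δ hδadd hδmul f hfadd hfright D hDadd hJordan
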